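/- Every qualitative MPRS game has a Nash equilibrium in deterministic memoryless strategies: there exists a memoryless deterministic strategy profile σ̂ = (σ̂^1,...,σ̂^N) such that for every player n ∈ {1,...,N}, every initial state s₀ ∈ S, and every (possibly history-dependent) deterministic strategy σ^n of player n, Q̃^n(s₀, σ̂^n, σ̂^{-n}) ≥ Q̃^n(s₀, σ^n, σ̂^{-n}). -/

import Mathlib

/-- A multi-player reachability/safety (MPRS) game on a finite vertex type `V`
with `N` players.  `succ v` is the (nonempty) set of out-neighbours of `v`,
`owner v` is the player who moves at `v` (the partition `V = V₁ ∪ ... ∪ V_N`),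
`target n` is player `n`'s nonempty target set `R_n`, `reacher n` tells whether
player `n` is a reacher (`true`) or an avoider (`false`), and `gamma` is the
discount factor. -/
structure MPRS (V : Type) [Fintype V] [DecidableEq V] (N : ℕ) where
  succ : V → Finset V
  succ_nonempty : ∀ v, (succ v).Nonempty
  owner : V → Fin N
  target : Fin N → Finset V
  target_nonempty : ∀ n, (target n).Nonempty
  reacher : Fin N → Bool
  gamma : ℝ
  gamma_pos : 0 < gamma
  gamma_lt_one : gamma < 1

namespace MPRS

/-- A deterministic, possibly history-dependent strategy: given the list of past
states and the current vertex, choose a next vertex.  (`none` is the terminal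
state `s̄`; a strategy is only ever consulted at non-target vertices owned by
the player, where it must choose an out-neighbour.) -/
abbrev Strat (V : Type) := List (Option V) → V → V

/-- A strategy is memoryless if it depends only on the current state. -/
def Memoryless {V : Type} (σ : Strat V) : Prop := ∀ h h' v, σ h v = σ h' v

variable {V : Type} [Fintype V] [DecidableEq V] {N : ℕ} (g : MPRS V N)

/-- The total target set `R = R₁ ∪ ... ∪ R_N`. -/
def totalTarget : Finset V := Finset.univ.biUnion g.target

/-- Validity of a strategy for player `n`: at any history ending in a vertex
`v ∈ V_n \ R`, it chooses an out-neighbour of `v`. -/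
def ValidStrat (n : Fin N) (σ : Strat V) : Prop :=
  ∀ (h : List (Option V)) (v : V), g.owner v = n → v ∉ g.totalTarget → σ h v ∈ g.succ v

/-- One step of the deterministic dynamics under profile `σ`, given past
history `h` and current state `s`.  From a target or terminal state the next
state is the terminal state `none`. -/
def step (σ : Fin N → Strat V) (h : List (Option V)) (s : Option V) : Option V :=
  match s with
  | none => none
  | some v => if v ∈ g.totalTarget then none else some (σ (g.owner v) h v)

/-- Auxiliary play function carrying the history. -/
def playAux (g : MPRS V N) (σ : Fin N → Strat V) : ℕ → List (Option V) → Option V → Option V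
  | 0, _, s => s
  | t + 1, h, s => playAux g σ t (h ++ [s]) (g.step σ h s)

/-- The induced play: `play σ s₀ t` is the state `s_t` of the unique play
determined by the profile `σ` and the initial state `s₀`. -/
def play (σ : Fin N → Strat V) (s₀ : Option V) (t : ℕ) : Option V :=
  g.playAux σ t [] s₀

/-- Player `n`'s turn payoff `q^n`. -/
def q (n : Fin N) : Option V → ℝ
  | none => 0
  | some v => if v ∈ g.target n then (if g.reacher n then 1 else -1) else 0

/-- Player `n`'s total quantitative payoff `Q^n(s₀, σ) = ∑ γ^t q^n(s_t)`. -/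
noncomputable def Q (n : Fin N) (s₀ : Option V) (σ : Fin N → Strat V) : ℝ :=
  ∑' t : ℕ, g.gamma ^ t * g.q n (g.play σ s₀ t)

/-- Player `n`'s qualitative payoff `Q̃^n(s₀, σ)`. -/
noncomputable def Qtil (n : Fin N) (s₀ : Option V) (σ : Fin N → Strat V) : ℝ :=
  if 0 < g.Q n s₀ σ then 1 else if g.Q n s₀ σ < 0 then -1 else 0

end MPRS

/-!
Values in `{-1, 0, 1}` are computed by backward induction from the targets. A vertex is decided
once its owner can move to a decided vertex of value `1`, or once all its successors are decided;
it then points to the best decided successor for its owner and inherits that successor's values.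
Undecided vertices are those from which the play can avoid the targets forever; they get value
`0` and point to an undecided successor. Against this memoryless profile a deviating player's value
can only decrease along the play, and while it is negative the decision rank strictly decreases,
so a deviation cannot avoid a target from a vertex of negative value.
-/

namespace MPRS

variable {V : Type} [Fintype V] [DecidableEq V] {N : ℕ} {g : MPRS V N}

lemma mem_totalTarget_of_mem_target {n : Fin N} {v : V} (hv : v ∈ g.target n) :
    v ∈ g.totalTarget :=
  Finset.mem_biUnion.mpr ⟨n, Finset.mem_univ n, hv⟩

lemma q_eq_zero_of_forall_ne {n : Fin N} {s : Option V}
    (hs : ∀ v ∈ g.totalTarget, s ≠ some v) : g.q n s = 0 := by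
  rcases s with _ | v
  · rfl
  · exact if_neg fun hv => hs v (mem_totalTarget_of_mem_target hv) rfl

lemma q_eq_neg_one_or_zero_or_one (n : Fin N) (s : Option V) :
    g.q n s = -1 ∨ g.q n s = 0 ∨ g.q n s = 1 := by
  rcases s with _ | v
  · simp [q]
  · simp only [q]
    split_ifs <;> simp

lemma step_some_of_not_mem (σ : Fin N → Strat V) (h : List (Option V)) {v : V}
    (hv : v ∉ g.totalTarget) : g.step σ h (some v) = some (σ (g.owner v) h v) :=
  if_neg hv

lemma exists_playAux_succ_eq_step (σ : Fin N → Strat V) (t : ℕ) :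
    ∀ h s, ∃ h', g.playAux σ (t + 1) h s = g.step σ h' (g.playAux σ t h s) := by
  induction t with
  | zero => exact fun h s => ⟨h, rfl⟩
  | succ t ih => exact fun h s => ih (h ++ [s]) (g.step σ h s)

lemma exists_play_succ_eq_step (σ : Fin N → Strat V) (s₀ : Option V) (t : ℕ) :
    ∃ h, g.play σ s₀ (t + 1) = g.step σ h (g.play σ s₀ t) :=
  exists_playAux_succ_eq_step σ t [] s₀

lemma play_none (σ : Fin N → Strat V) (t : ℕ) : g.play σ none t = none := by
  induction t with
  | zero => rfl
  | succ t ih =>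
    obtain ⟨h, e⟩ := exists_play_succ_eq_step σ none t
    rw [e, ih]
    rfl

lemma play_eq_none_of_mem_totalTarget {σ : Fin N → Strat V} {s₀ : Option V} {T : ℕ} {r : V}
    (hT : g.play σ s₀ T = some r) (hr : r ∈ g.totalTarget) :
    ∀ t, T < t → g.play σ s₀ t = none := by
  intro t ht
  induction t, ht using Nat.le_induction with
  | base =>
    obtain ⟨h, e⟩ := exists_play_succ_eq_step σ s₀ T
    rw [e, hT]
    exact if_pos hr
  | succ t _ ih =>
    obtain ⟨h, e⟩ := exists_play_succ_eq_step σ s₀ t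
    rw [e, ih]
    rfl

variable (g) in
def AvoidsUntil (σ : Fin N → Strat V) (s₀ : Option V) (T : ℕ) : Prop :=
  ∀ t < T, ∀ v ∈ g.totalTarget, g.play σ s₀ t ≠ some v

lemma Qtil_eq_of_Q_eq_mul {n : Fin N} {s₀ : Option V} {σ : Fin N → Strat V} {c x : ℝ}
    (hc : 0 < c) (hx : x = -1 ∨ x = 0 ∨ x = 1) (hQ : g.Q n s₀ σ = c * x) :
    g.Qtil n s₀ σ = x := by
  unfold Qtil
  rcases hx with rfl | rfl | rfl <;> simp [hQ, hc, hc.le.not_gt]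

lemma Qtil_eq_zero_of_forall_avoidsUntil {n : Fin N} {s₀ : Option V} {σ : Fin N → Strat V}
    (hav : ∀ T, g.AvoidsUntil σ s₀ T) : g.Qtil n s₀ σ = 0 := by
  refine Qtil_eq_of_Q_eq_mul one_pos (by norm_num) ?_
  have hterm : ∀ t, g.gamma ^ t * g.q n (g.play σ s₀ t) = 0 := fun t => by
    rw [q_eq_zero_of_forall_ne (hav (t + 1) t t.lt_succ_self), mul_zero]
  rw [Q, tsum_congr hterm, tsum_zero, mul_zero]

lemma Qtil_eq_q_of_first_hit {n : Fin N} {s₀ : Option V} {σ : Fin N → Strat V} {T : ℕ}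
    {r : V}
    (hT : g.play σ s₀ T = some r) (hr : r ∈ g.totalTarget) (hav : g.AvoidsUntil σ s₀ T) :
    g.Qtil n s₀ σ = g.q n (some r) := by
  refine Qtil_eq_of_Q_eq_mul (pow_pos g.gamma_pos T) (q_eq_neg_one_or_zero_or_one n _) ?_
  have hterm : ∀ t ≠ T, g.gamma ^ t * g.q n (g.play σ s₀ t) = 0 := by
    intro t ht
    rcases ht.lt_or_gt with hlt | hgt
    · rw [q_eq_zero_of_forall_ne (hav t hlt), mul_zero]
    · rw [play_eq_none_of_mem_totalTarget hT hr t hgt]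
      exact mul_zero _
  rw [Q, tsum_eq_single T hterm, hT]

lemma Qtil_eq_of_first_hit_or_avoids (n : Fin N) (s₀ : Option V) (σ : Fin N → Strat V) :
    (∃ T r, g.play σ s₀ T = some r ∧ r ∈ g.totalTarget ∧ g.AvoidsUntil σ s₀ T ∧
        g.Qtil n s₀ σ = g.q n (some r)) ∨
      ((∀ T, g.AvoidsUntil σ s₀ T) ∧ g.Qtil n s₀ σ = 0) := by
  classical
  by_cases hhit : ∃ T, ∃ r ∈ g.totalTarget, g.play σ s₀ T = some r
  · obtain ⟨r, hr, hT⟩ := Nat.find_spec hhit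
    have hav : g.AvoidsUntil σ s₀ (Nat.find hhit) :=
      fun t ht v hv hv' => Nat.find_min hhit ht ⟨v, hv, hv'⟩
    exact Or.inl ⟨_, r, hT, hr, hav, Qtil_eq_q_of_first_hit hT hr hav⟩
  · have hav : ∀ T, g.AvoidsUntil σ s₀ T := fun _ t _ v hv hv' => hhit ⟨t, v, hv, hv'⟩
    exact Or.inr ⟨hav, Qtil_eq_zero_of_forall_avoidsUntil hav⟩

lemma Qtil_none (n : Fin N) (σ : Fin N → Strat V) : g.Qtil n none σ = 0 :=
  Qtil_eq_zero_of_forall_avoidsUntil fun _ t _ v _ => by simp [play_none]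

variable (g) in
def IsPotential (σ : Fin N → Strat V) (ψ : V → ℝ) (ρ : V → ℕ) : Prop :=
  ∀ h u, u ∉ g.totalTarget →
    ∃ w, g.step σ h (some u) = some w ∧ ψ w ≤ ψ u ∧ (ψ u < 0 → ρ w < ρ u)

lemma IsPotential.exists_play_eq_some {σ : Fin N → Strat V} {ψ : V → ℝ} {ρ : V → ℕ}
    (hψ : g.IsPotential σ ψ ρ) (v : V) :
    ∀ T, g.AvoidsUntil σ (some v) T →
      ∃ u, g.play σ (some v) T = some u ∧ ψ u ≤ ψ v ∧
        (ψ v < 0 → ρ u + T ≤ ρ v) := by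
  intro T
  induction T with
  | zero => exact fun _ => ⟨v, rfl, le_rfl, fun _ => by omega⟩
  | succ T ih =>
    intro hav
    obtain ⟨u, hu, hψu, hρu⟩ := ih fun t ht => hav t (ht.trans T.lt_succ_self)
    have huR : u ∉ g.totalTarget := fun huR => hav T T.lt_succ_self u huR hu
    obtain ⟨h, e⟩ := exists_play_succ_eq_step σ (some v) T
    obtain ⟨w, hw, hψw, hρw⟩ := hψ h u huR
    refine ⟨w, by rw [e, hu, hw], hψw.trans hψu, fun hneg => ?_⟩
    have := hρw (hψu.trans_lt hneg)
    have := hρu hneg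
    omega

/-- With `ε = -1` this gives lower bounds on the payoff. -/
lemma IsPotential.mul_Qtil_le {σ : Fin N → Strat V} {ψ : V → ℝ} {ρ : V → ℕ}
    (hψ : g.IsPotential σ ψ ρ) {n : Fin N} {ε : ℝ}
    (hR : ∀ r ∈ g.totalTarget, ε * g.q n (some r) ≤ ψ r) (v : V) :
    ε * g.Qtil n (some v) σ ≤ ψ v := by
  rcases Qtil_eq_of_first_hit_or_avoids n (some v) σ with
    ⟨T, r, hT, hr, hav, hQ⟩ | ⟨hav, hQ⟩
  · obtain ⟨u, hu, hψu, -⟩ := hψ.exists_play_eq_some v T hav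
    obtain rfl : u = r := Option.some.inj (hu.symm.trans hT)
    rw [hQ]
    exact (hR u hr).trans hψu
  · rw [hQ, mul_zero]
    by_contra! hneg
    obtain ⟨u, -, -, hρ⟩ := hψ.exists_play_eq_some v (ρ v + 1) (hav _)
    have := hρ hneg
    omega

variable (g) in
/-- `rank` certifies that the pointer play reaches a target from a vertex of nonzero value, and
that no deviation avoids the targets forever from a vertex of negative value. -/
structure Certificate where
  next : V → V
  val : Fin N → V → ℝ
  rank : V → ℕ
  next_mem_succ : ∀ v ∉ g.totalTarget, next v ∈ g.succ v
  val_eq_q : ∀ v ∈ g.totalTarget, ∀ n, val n v = g.q n (some v)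
  val_next : ∀ v ∉ g.totalTarget, ∀ n, val n (next v) = val n v
  val_succ_le : ∀ v ∉ g.totalTarget, ∀ w ∈ g.succ v, val (g.owner v) w ≤ val (g.owner v) v
  rank_next_lt : ∀ v ∉ g.totalTarget, ∀ n, val n v ≠ 0 → rank (next v) < rank v
  rank_succ_lt : ∀ v ∉ g.totalTarget, val (g.owner v) v < 0 →
    ∀ w ∈ g.succ v, rank w < rank v

namespace Certificate

variable (c : Certificate g)

def profile : Fin N → Strat V := fun _ _ => c.next

lemma validStrat_profile (n : Fin N) : g.ValidStrat n (c.profile n) :=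
  fun _ v _ hv => c.next_mem_succ v hv

lemma isPotential_update {n : Fin N} {σn : Strat V} (hσn : g.ValidStrat n σn) :
    g.IsPotential (Function.update c.profile n σn) (c.val n) c.rank := by
  intro h u hu
  rw [step_some_of_not_mem _ h hu]
  by_cases ho : g.owner u = n
  · subst ho
    have hw := hσn h u rfl hu
    rw [Function.update_self]
    exact ⟨_, rfl, c.val_succ_le u hu _ hw, fun hneg => c.rank_succ_lt u hu hneg _ hw⟩
  · rw [Function.update_of_ne ho]
    exact ⟨c.next u, rfl, (c.val_next u hu n).le, fun hneg => c.rank_next_lt u hu n hneg.ne⟩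

lemma isPotential_neg_val (n : Fin N) : g.IsPotential c.profile (fun v => -c.val n v) c.rank :=
  fun h u hu => ⟨c.next u, step_some_of_not_mem _ h hu, by dsimp only; rw [c.val_next u hu n],
    fun hneg => c.rank_next_lt u hu n (by linarith)⟩

lemma Qtil_update_le {n : Fin N} {σn : Strat V} (hσn : g.ValidStrat n σn) (v : V) :
    g.Qtil n (some v) (Function.update c.profile n σn) ≤ c.val n v := by
  simpa using (c.isPotential_update hσn).mul_Qtil_le (ε := 1)
    (fun r hr => by rw [one_mul, c.val_eq_q r hr n]) v

lemma Qtil_profile (n : Fin N) (v : V) : g.Qtil n (some v) c.profile = c.val n v := by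
  refine le_antisymm ?_ ?_
  · simpa using c.Qtil_update_le (c.validStrat_profile n) v
  · have := (c.isPotential_neg_val n).mul_Qtil_le (ε := -1)
      (fun r hr => by rw [c.val_eq_q r hr n, neg_one_mul]) v
    linarith

end Certificate

variable (g) in
/-- The backward induction in progress: `dom` is the set of decided vertices, and `rank` is
the order in which they were decided. -/
structure PartialCertificate where
  dom : Finset V
  next : V → V
  val : Fin N → V → ℝ
  rank : V → ℕ
  totalTarget_subset : g.totalTarget ⊆ dom
  next_spec : ∀ v ∈ dom, v ∉ g.totalTarget →
    next v ∈ g.succ v ∧ next v ∈ dom ∧ rank (next v) < rank v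
  val_eq_q : ∀ v ∈ g.totalTarget, ∀ n, val n v = g.q n (some v)
  val_next : ∀ v ∈ dom, v ∉ g.totalTarget → ∀ n, val n (next v) = val n v
  owner_optimal : ∀ v ∈ dom, v ∉ g.totalTarget → val (g.owner v) v = 1 ∨
    ∀ w ∈ g.succ v, w ∈ dom ∧ val (g.owner v) w ≤ val (g.owner v) v ∧ rank w < rank v
  val_le_zero_or_eq_one : ∀ v ∈ dom, ∀ n, val n v ≤ 0 ∨ val n v = 1
  rank_lt_card : ∀ v ∈ dom, rank v < dom.card

namespace PartialCertificate

variable (P : PartialCertificate g)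

variable (g) in
noncomputable def init : PartialCertificate g where
  dom := g.totalTarget
  next v := (g.succ_nonempty v).choose
  val n v := g.q n (some v)
  rank _ := 0
  totalTarget_subset := subset_rfl
  next_spec _ hv hv' := absurd hv hv'
  val_eq_q _ _ _ := rfl
  val_next _ hv hv' := absurd hv hv'
  owner_optimal _ hv hv' := absurd hv hv'
  val_le_zero_or_eq_one v _ n := by
    rcases q_eq_neg_one_or_zero_or_one (g := g) n (some v) with h | h | h <;> rw [h] <;> norm_num
  rank_lt_card _ hv := Finset.card_pos.mpr ⟨_, hv⟩

def Extendable (v : V) : Prop :=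
  (∃ w ∈ g.succ v, w ∈ P.dom ∧ P.val (g.owner v) w = 1) ∨ ∀ w ∈ g.succ v, w ∈ P.dom

lemma val_le_one {v : V} (hv : v ∈ P.dom) (n : Fin N) : P.val n v ≤ 1 := by
  rcases P.val_le_zero_or_eq_one v hv n with h | h <;> linarith

lemma Extendable.exists_best_succ {P : PartialCertificate g} {v : V} (hext : P.Extendable v) :
    ∃ w ∈ g.succ v, w ∈ P.dom ∧ (P.val (g.owner v) w = 1 ∨
      ∀ w' ∈ g.succ v, w' ∈ P.dom ∧ P.val (g.owner v) w' ≤ P.val (g.owner v) w) := by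
  rcases hext with ⟨w, hw, hwD, h1⟩ | hall
  · exact ⟨w, hw, hwD, Or.inl h1⟩
  · obtain ⟨w, hw, hmax⟩ :=
      Finset.exists_max_image (g.succ v) (P.val (g.owner v)) (g.succ_nonempty v)
    exact ⟨w, hw, hall w hw, Or.inr fun w' hw' => ⟨hall w' hw', hmax w' hw'⟩⟩

def extend {v w : V} (hv : v ∉ P.dom) (hw : w ∈ g.succ v) (hwD : w ∈ P.dom)
    (hbest : P.val (g.owner v) w = 1 ∨
      ∀ w' ∈ g.succ v, w' ∈ P.dom ∧ P.val (g.owner v) w' ≤ P.val (g.owner v) w) :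
    PartialCertificate g :=
  have hne : ∀ u ∈ P.dom, u ≠ v := fun u hu h => hv (h ▸ hu)
  { dom := insert v P.dom
    next := Function.update P.next v w
    val n := Function.update (P.val n) v (P.val n w)
    rank := Function.update P.rank v P.dom.card
    totalTarget_subset := P.totalTarget_subset.trans (Finset.subset_insert v P.dom)
    next_spec u hu huR := by
      rcases Finset.mem_insert.mp hu with rfl | hu
      · simp only [Function.update_self, Function.update_of_ne (hne w hwD)]
        exact ⟨hw, Finset.mem_insert_of_mem hwD, P.rank_lt_card w hwD⟩
      · obtain ⟨hsucc, hnextD, hrank⟩ := P.next_spec u hu huR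
        simp only [Function.update_of_ne (hne u hu), Function.update_of_ne (hne _ hnextD)]
        exact ⟨hsucc, Finset.mem_insert_of_mem hnextD, hrank⟩
    val_eq_q u hu n := by
      simp only [Function.update_of_ne (hne u (P.totalTarget_subset hu)), P.val_eq_q u hu n]
    val_next u hu huR n := by
      rcases Finset.mem_insert.mp hu with rfl | hu
      · simp only [Function.update_self, Function.update_of_ne (hne w hwD)]
      · simp only [Function.update_of_ne (hne u hu),
          Function.update_of_ne (hne _ (P.next_spec u hu huR).2.1), P.val_next u hu huR n]
    owner_optimal u hu huR := by
      rcases Finset.mem_insert.mp hu with rfl | hu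
      · simp only [Function.update_self]
        refine hbest.imp id fun hmax w' hw' => ?_
        obtain ⟨hw'D, hle⟩ := hmax w' hw'
        simp only [Function.update_of_ne (hne w' hw'D)]
        exact ⟨Finset.mem_insert_of_mem hw'D, hle, P.rank_lt_card w' hw'D⟩
      · simp only [Function.update_of_ne (hne u hu)]
        refine (P.owner_optimal u hu huR).imp id fun hall w' hw' => ?_
        obtain ⟨hw'D, hle, hlt⟩ := hall w' hw'
        simp only [Function.update_of_ne (hne w' hw'D)]
        exact ⟨Finset.mem_insert_of_mem hw'D, hle, hlt⟩
    val_le_zero_or_eq_one u hu n := by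
      rcases Finset.mem_insert.mp hu with rfl | hu
      · rw [Function.update_self]
        exact P.val_le_zero_or_eq_one w hwD n
      · rw [Function.update_of_ne (hne u hu)]
        exact P.val_le_zero_or_eq_one u hu n
    rank_lt_card u hu := by
      rw [Finset.card_insert_of_notMem hv]
      rcases Finset.mem_insert.mp hu with rfl | hu
      · rw [Function.update_self]
        exact P.dom.card.lt_succ_self
      · rw [Function.update_of_ne (hne u hu)]
        exact (P.rank_lt_card u hu).trans P.dom.card.lt_succ_self }

lemma exists_succ_not_mem_of_saturated (hsat : ∀ v ∉ P.dom, ¬P.Extendable v) {v : V}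
    (hv : v ∉ P.dom) : ∃ w ∈ g.succ v, w ∉ P.dom := by
  by_contra! h
  exact hsat v hv (Or.inr h)

noncomputable def toCertificate (hsat : ∀ v ∉ P.dom, ¬P.Extendable v) : Certificate g where
  next v :=
    if hv : v ∈ P.dom then P.next v else (P.exists_succ_not_mem_of_saturated hsat hv).choose
  val n v := if v ∈ P.dom then P.val n v else 0
  rank := P.rank
  next_mem_succ v hvR := by
    by_cases hv : v ∈ P.dom
    · rw [dif_pos hv]
      exact (P.next_spec v hv hvR).1
    · rw [dif_neg hv]
      exact (P.exists_succ_not_mem_of_saturated hsat hv).choose_spec.1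
  val_eq_q v hv n := by
    rw [if_pos (P.totalTarget_subset hv)]
    exact P.val_eq_q v hv n
  val_next v hvR n := by
    by_cases hv : v ∈ P.dom
    · rw [dif_pos hv, if_pos (P.next_spec v hv hvR).2.1, if_pos hv]
      exact P.val_next v hv hvR n
    · rw [dif_neg hv, if_neg (P.exists_succ_not_mem_of_saturated hsat hv).choose_spec.2, if_neg hv]
  val_succ_le v hvR w hw := by
    by_cases hv : v ∈ P.dom
    · rw [if_pos hv]
      rcases P.owner_optimal v hv hvR with h1 | hall
      · rw [h1]
        split_ifs with hwD
        exacts [P.val_le_one hwD _, zero_le_one]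
      · rw [if_pos (hall w hw).1]
        exact (hall w hw).2.1
    · rw [if_neg hv]
      split_ifs with hwD
      · exact (P.val_le_zero_or_eq_one w hwD _).resolve_right
          fun h1 => hsat v hv (Or.inl ⟨w, hw, hwD, h1⟩)
      · exact le_rfl
  rank_next_lt v hvR n hval := by
    by_cases hv : v ∈ P.dom
    · rw [dif_pos hv]
      exact (P.next_spec v hv hvR).2.2
    · exact absurd (if_neg hv) hval
  rank_succ_lt v hvR hneg w hw := by
    by_cases hv : v ∈ P.dom
    · rw [if_pos hv] at hneg
      rcases P.owner_optimal v hv hvR with h1 | hall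
      · linarith
      · exact (hall w hw).2.2
    · rw [if_neg hv] at hneg
      exact absurd hneg (lt_irrefl 0)

lemma nonempty_certificate (P : PartialCertificate g) : Nonempty (Certificate g) := by
  by_cases h : ∃ v ∉ P.dom, P.Extendable v
  · obtain ⟨v, hv, hext⟩ := h
    obtain ⟨w, hw, hwD, hbest⟩ := hext.exists_best_succ
    have : Fintype.card V - (insert v P.dom).card < Fintype.card V - P.dom.card := by
      have := (insert v P.dom).card_le_univ
      rw [Finset.card_insert_of_notMem hv] at this ⊢
      omega
    exact (P.extend hv hw hwD hbest).nonempty_certificate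
  · push Not at h
    exact ⟨P.toCertificate h⟩
termination_by Fintype.card V - P.dom.card

end PartialCertificate

end MPRS

/-- Every qualitative MPRS game has a Nash equilibrium in deterministic
memoryless strategies. -/
theorem qualitative_MPRS_has_memoryless_NE
    {V : Type} [Fintype V] [DecidableEq V] {N : ℕ} (g : MPRS V N) :
    ∃ σhat : Fin N → MPRS.Strat V,
      (∀ n, g.ValidStrat n (σhat n)) ∧
      (∀ n, MPRS.Memoryless (σhat n)) ∧
      (∀ (n : Fin N) (s₀ : Option V) (σn : MPRS.Strat V), g.ValidStrat n σn →
        g.Qtil n s₀ (Function.update σhat n σn) ≤ g.Qtil n s₀ σhat) := by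
  obtain ⟨c⟩ := (MPRS.PartialCertificate.init g).nonempty_certificate
  refine ⟨c.profile, c.validStrat_profile, fun _ _ _ _ => rfl, fun n s₀ σn hσn => ?_⟩
  cases s₀ with
  | none => rw [MPRS.Qtil_none, MPRS.Qtil_none]
  | some v => exact (c.Qtil_update_le hσn v).trans_eq (c.Qtil_profile n v).symm
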